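/- arXiv:2510.11071 — 4 statements merged into one kernel-verified Lean document; each statement's English description precedes it below -/
import Mathlib

section
/- For the binary prior case, no posterior estimator can be exactly unbiased: if p : {0,...,n} → [0,1] and α > 0 with α ≠ 1, then the function q ↦ ∑_{k=0}^n p(k) * C(n,k) * q^k * (1-q)^(n-k) (a polynomial in q) cannot equal q ↦ αq/(αq + 1 - q) for all q in (0,1). -/
open Polynomial

/-! Clearing the denominator, a polynomial `P` with `P(q) = αq / (αq + 1 - q)` on `(0,1)` satisfies
`P(q) ((α - 1) q + 1) = αq` at infinitely many points, hence identically. Evaluating at the root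
`q₀ = 1/(1 - α)` of the denominator gives `0 = α q₀`, impossible for `α ≠ 0`. -/

theorem Polynomial.isRoot_of_mul_eval_eq_on_infinite {R : Type*} [CommRing R] [IsDomain R]
    {P D N : R[X]} {S : Set R} (hS : S.Infinite)
    (h : ∀ x ∈ S, P.eval x * D.eval x = N.eval x) {r : R} (hr : D.IsRoot r) : N.IsRoot r := by
  have hPDN : P * D = N :=
    eq_of_infinite_eval_eq _ _ (hS.mono fun x hx => by simpa using h x hx)
  rw [IsRoot, ← hPDN, eval_mul, hr.eq_zero, mul_zero]

theorem bernsteinPolynomial.eval_sum_C_mul {R : Type*} [CommRing R] (n : ℕ) (p : Fin (n + 1) → R)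
    (q : R) :
    (∑ k : Fin (n + 1), C (p k) * bernsteinPolynomial R n k).eval q
      = ∑ k : Fin (n + 1), p k * (n.choose k : R) * q ^ (k : ℕ) * (1 - q) ^ (n - (k : ℕ)) := by
  simp only [eval_finsetSum, bernsteinPolynomial, eval_mul, eval_C, eval_natCast, eval_pow,
    eval_X, eval_sub, eval_one, mul_assoc]

/-- Impossibility of exact unbiasedness in the binary prior case: no function
`p : {0,...,n} → ℝ` makes the polynomial `q ↦ ∑ₖ p k * C(n,k) qᵏ (1-q)^{n-k}`
equal to the rational function `q ↦ αq/(αq + 1 - q)` on all of `(0,1)`. -/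
theorem no_exact_unbiased_binary (n : ℕ) (α : ℝ) (hα : 0 < α) (hα1 : α ≠ 1)
    (p : Fin (n + 1) → ℝ) :
    ¬ (∀ q ∈ Set.Ioo (0 : ℝ) 1,
      ∑ k : Fin (n + 1), p k * (n.choose k : ℝ) * q ^ (k : ℕ) * (1 - q) ^ (n - (k : ℕ))
        = α * q / (α * q + 1 - q)) := by
  intro h
  have hα1' : 1 - α ≠ 0 := sub_ne_zero.mpr hα1.symm
  have hroot : (C (α - 1) * X + 1 : ℝ[X]).IsRoot (1 - α)⁻¹ := by
    simp only [IsRoot, eval_add, eval_mul, eval_C, eval_X, eval_one]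
    field_simp
    ring
  have hcleared : ∀ q ∈ Set.Ioo (0 : ℝ) 1,
      (∑ k : Fin (n + 1), C (p k) * bernsteinPolynomial ℝ n k).eval q
        * (C (α - 1) * X + 1 : ℝ[X]).eval q = (C α * X : ℝ[X]).eval q := by
    intro q hq
    have hden : α * q + 1 - q ≠ 0 := by nlinarith [hq.1, hq.2]
    simp only [bernsteinPolynomial.eval_sum_C_mul, h q hq, eval_add, eval_mul, eval_C, eval_X,
      eval_one]
    field_simp
    ring
  have hN := isRoot_of_mul_eval_eq_on_infinite (Set.Ioo_infinite zero_lt_one) hcleared hroot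
  simp only [IsRoot, eval_mul, eval_C, eval_X] at hN
  exact mul_ne_zero hα.ne' (inv_ne_zero hα1') hN
end

section
/- For the multivariate Bernstein basis b_{n,ν} on the simplex Δ_m and any multi-index α ∈ ℕ^m, the centered moment T_{n,α}(q) := ∑_{ν : ∑νⱼ = n} (ν - n q)^α b_{n,ν}(q) satisfies |T_{n,α}(q)| ≤ C(α, m) · n^{⌊‖α‖₁/2⌋} for all q ∈ Δ_m, where C(α,m) is a constant independent of n. -/
/-!
Realise `T ~ Multinomial(n, q)` as the letter counts of a random word `ω` of length `n` whose
letters are independent with law `q`. Then `T_j - n q_j = ∑ᵢ ([ω i = j] - q_j)`, and expanding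
`∏ⱼ (T_j - n q_j)^{α_j}` gives a sum over maps `a` from the `k = ‖α‖₁` factors to the positions.
By independence each term factorises over positions, and it vanishes as soon as some position
receives exactly one factor, because a centred indicator has mean zero. Every other term is
bounded by `1`, and the maps `a` with no singleton fibre take at most `k / 2` values, so there are
at most `n^{k/2} (k/2)^k` of them.
-/

/-- The multivariate Bernstein basis polynomial `b_{n,ν}(q) = (n!/∏ νⱼ!) ∏ qⱼ^{νⱼ}`. -/
noncomputable def bernBasis {m : ℕ} (ν : Fin m → ℕ) (q : Fin m → ℝ) : ℝ :=
  (Nat.multinomial Finset.univ ν : ℝ) * ∏ j, q j ^ ν j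

open Finset

section Words

variable {ι σ : Type*} [Fintype ι] [Fintype σ] [DecidableEq σ]

def letterCount (ω : ι → σ) (x : σ) : ℕ := #{i | ω i = x}

theorem sum_letterCount (ω : ι → σ) : ∑ x, letterCount ω x = Fintype.card ι := by
  simp only [letterCount, ← card_univ]
  exact (card_eq_sum_card_fiberwise fun i _ => mem_univ (ω i)).symm

theorem prod_comp_eq_prod_pow_letterCount {M : Type*} [CommMonoid M] (f : σ → M) (ω : ι → σ) :
    ∏ i, f (ω i) = ∏ x, f x ^ letterCount ω x := by
  rw [← prod_fiberwise' univ ω f]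
  simp [letterCount]

/- Both sides are the coefficient of `∏ₓ Xₓ ^ ν x` in `(∑ₓ Xₓ) ^ card ι`, expanded once as a sum
over words and once by the multinomial theorem. -/
open MvPolynomial in
theorem card_letterCount_eq_multinomial [DecidableEq ι] (ν : σ → ℕ)
    (hν : ∑ x, ν x = Fintype.card ι) :
    #{ω : ι → σ | letterCount ω = ν} = Nat.multinomial univ ν := by
  have hpow : (∑ x, X x : MvPolynomial σ ℕ) ^ Fintype.card ι =
      ∑ ω : ι → σ, monomial (Finsupp.equivFunOnFinite.symm (letterCount ω)) 1 := by
    rw [← card_univ, ← prod_const, Fintype.prod_sum]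
    refine sum_congr rfl fun ω _ => ?_
    rw [prod_comp_eq_prod_pow_letterCount, monomial_eq, C_1, one_mul,
      Finsupp.prod_fintype _ _ (by simp)]
    rfl
  have hcoeff := coeff_sum_X_pow_of_fintype (R := ℕ) (Finsupp.equivFunOnFinite.symm ν)
    (Fintype.card ι)
  rw [hpow, coeff_sum, Finsupp.sum_fintype _ _ (by simp),
    Finsupp.multinomial_eq_of_support_subset (subset_univ _)] at hcoeff
  simpa only [coeff_monomial, EmbeddingLike.apply_eq_iff_eq, Finsupp.coe_equivFunOnFinite_symm,
    hν, if_true, Nat.cast_id, sum_boole] using hcoeff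

end Words

theorem sum_mul_bernBasis_eq_sum_words {m n : ℕ} (q : Fin m → ℝ) (F : (Fin m → ℕ) → ℝ) :
    ∑ ν ∈ Nat.antidiagonalTuple m n, F ν * bernBasis ν q =
      ∑ ω : Fin n → Fin m, (∏ i, q (ω i)) * F (letterCount ω) := by
  have hmaps : ∀ ω ∈ (univ : Finset (Fin n → Fin m)), letterCount ω ∈ Nat.antidiagonalTuple m n :=
    fun ω _ => Nat.mem_antidiagonalTuple.2 (by rw [sum_letterCount, Fintype.card_fin])
  rw [← sum_fiberwise_of_maps_to hmaps]
  refine sum_congr rfl fun ν hν => ?_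
  have hν' : ∑ j, ν j = Fintype.card (Fin n) := by
    rw [Fintype.card_fin]
    exact Nat.mem_antidiagonalTuple.1 hν
  rw [sum_congr rfl fun ω hω => by rw [prod_comp_eq_prod_pow_letterCount, (mem_filter.1 hω).2],
    sum_const, card_letterCount_eq_multinomial ν hν', nsmul_eq_mul, bernBasis]
  ring

section Expansion

variable {R ι σ : Type*} [CommSemiring R] [Fintype ι] [Fintype σ]

theorem prod_pow_sum_eq_sum_prod [DecidableEq σ] (α : σ → ℕ) (f : σ → ι → R) :
    ∏ j, (∑ i, f j i) ^ α j = ∑ a : (Σ j, Fin (α j)) → ι, ∏ k, f k.1 (a k) := by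
  rw [← Fintype.prod_sum, Fintype.prod_sigma]
  simp

theorem sum_words_mul_prod_eq_prod_sum [DecidableEq ι] {K : Type*} [Fintype K] (q : σ → R)
    (g : σ → K → R) (a : K → ι) :
    ∑ ω : ι → σ, (∏ i, q (ω i)) * ∏ k, g (ω (a k)) k =
      ∏ i, ∑ x, q x * ∏ k with a k = i, g x k := by
  rw [Fintype.prod_sum]
  refine sum_congr rfl fun ω _ => ?_
  rw [prod_mul_distrib, ← prod_fiberwise univ a fun k => g (ω (a k)) k]
  congr 1
  refine prod_congr rfl fun i _ => prod_congr rfl fun k hk => ?_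
  rw [(mem_filter.1 hk).2]

end Expansion

section Centered

variable {σ : Type*} [DecidableEq σ] {q : σ → ℝ}

def centeredOneHot (q : σ → ℝ) (x j : σ) : ℝ := (if x = j then 1 else 0) - q j

theorem letterCount_sub_eq_sum_centeredOneHot {ι : Type*} [Fintype ι] (ω : ι → σ) (j : σ) :
    (letterCount ω j : ℝ) - Fintype.card ι * q j = ∑ i, centeredOneHot q (ω i) j := by
  simp [centeredOneHot, sum_sub_distrib, letterCount, sum_boole]

variable [Fintype σ]

theorem abs_centeredOneHot_le_one (hq : ∀ j, 0 ≤ q j) (hq1 : ∑ j, q j = 1) (x j : σ) :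
    |centeredOneHot q x j| ≤ 1 := by
  have hqj : q j ≤ 1 := hq1 ▸ single_le_sum (fun i _ => hq i) (mem_univ j)
  unfold centeredOneHot
  split_ifs <;> rw [abs_le] <;> constructor <;> linarith [hq j]

theorem abs_sum_mul_prod_centeredOneHot_le_one (hq : ∀ j, 0 ≤ q j) (hq1 : ∑ j, q j = 1)
    {K : Type*} (s : Finset K) (c : K → σ) :
    |∑ x, q x * ∏ k ∈ s, centeredOneHot q x (c k)| ≤ 1 := by
  calc |∑ x, q x * ∏ k ∈ s, centeredOneHot q x (c k)|
      ≤ ∑ x, q x * |∏ k ∈ s, centeredOneHot q x (c k)| := by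
        refine (abs_sum_le_sum_abs _ _).trans (le_of_eq (sum_congr rfl fun x _ => ?_))
        rw [abs_mul, abs_of_nonneg (hq x)]
    _ ≤ ∑ x, q x := by
        refine sum_le_sum fun x _ => mul_le_of_le_one_right (hq x) ?_
        rw [abs_prod]
        exact prod_le_one (fun _ _ => abs_nonneg _)
          fun k _ => abs_centeredOneHot_le_one hq hq1 x (c k)
    _ = 1 := hq1

theorem sum_mul_prod_centeredOneHot_eq_zero (hq1 : ∑ j, q j = 1) {K : Type*} {s : Finset K}
    (hs : #s = 1) (c : K → σ) : ∑ x, q x * ∏ k ∈ s, centeredOneHot q x (c k) = 0 := by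
  obtain ⟨k, rfl⟩ := card_eq_one.1 hs
  simp [centeredOneHot, mul_sub, sum_sub_distrib, ← sum_mul, hq1]

theorem abs_sum_words_prod_centered_pow_le {ι : Type*} [Fintype ι] [DecidableEq ι]
    (hq : ∀ j, 0 ≤ q j) (hq1 : ∑ j, q j = 1) (α : σ → ℕ) :
    |∑ ω : ι → σ, (∏ i, q (ω i)) * ∏ j, ((letterCount ω j : ℝ) - Fintype.card ι * q j) ^ α j|
      ≤ #{a : (Σ j, Fin (α j)) → ι | ∀ i, #{k | a k = i} ≠ 1} := by
  simp_rw [letterCount_sub_eq_sum_centeredOneHot, prod_pow_sum_eq_sum_prod, mul_sum]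
  rw [sum_comm]
  simp_rw [sum_words_mul_prod_eq_prod_sum q (fun x (k : Σ j, Fin (α j)) => centeredOneHot q x k.1)]
  calc _ ≤ ∑ a : (Σ j, Fin (α j)) → ι,
          |∏ i, ∑ x, q x * ∏ k with a k = i, centeredOneHot q x k.1| := abs_sum_le_sum_abs _ _
    _ ≤ ∑ a : (Σ j, Fin (α j)) → ι, if ∀ i, #{k | a k = i} ≠ 1 then (1 : ℝ) else 0 :=
        sum_le_sum fun a _ => ?_
    _ = _ := by rw [sum_boole]
  split_ifs with hfibers
  · rw [abs_prod]
    exact prod_le_one (fun _ _ => abs_nonneg _)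
      fun i _ => abs_sum_mul_prod_centeredOneHot_le_one hq hq1 _ _
  · push Not at hfibers
    obtain ⟨i, hi⟩ := hfibers
    rw [prod_eq_zero (mem_univ i) (sum_mul_prod_centeredOneHot_eq_zero hq1 hi _), abs_zero]

end Centered

section Counting

variable {K ι : Type*} [Fintype K] [DecidableEq ι]

theorem two_mul_card_image_le_of_card_fiber_ne_one {a : K → ι}
    (ha : ∀ i, #{k | a k = i} ≠ 1) : 2 * #(univ.image a) ≤ Fintype.card K := by
  rw [← card_univ, card_eq_sum_card_image a univ, mul_comm, ← smul_eq_mul, ← sum_const]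
  refine sum_le_sum fun i hi => ?_
  obtain ⟨k, -, rfl⟩ := mem_image.1 hi
  have hpos : 0 < #{k' | a k' = a k} := card_pos.2 ⟨k, by simp⟩
  have := ha (a k)
  omega

/- A map taking at most `r` values factors through `Fin r`. -/
theorem card_filter_card_image_le [Fintype ι] [DecidableEq K] [Nonempty ι] (r : ℕ) :
    #{a : K → ι | #(univ.image a) ≤ r} ≤ Fintype.card ι ^ r * r ^ Fintype.card K := by
  have hsub : ({a : K → ι | #(univ.image a) ≤ r} : Finset _) ⊆
      univ.image fun p : (Fin r → ι) × (K → Fin r) => p.1 ∘ p.2 := by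
    intro a ha
    obtain ⟨e⟩ : Nonempty (univ.image a ↪ Fin r) :=
      Function.Embedding.nonempty_of_card_le
        (by rw [Fintype.card_coe, Fintype.card_fin]; exact (mem_filter.1 ha).2)
    refine mem_image.2 ⟨(Function.extend e Subtype.val fun _ => Classical.arbitrary ι,
      fun k => e ⟨a k, mem_image_of_mem a (mem_univ k)⟩), mem_univ _, funext fun k => ?_⟩
    dsimp only [Function.comp_apply]
    exact e.injective.extend_apply _ _ _
  calc _ ≤ _ := card_le_card hsub
    _ ≤ _ := card_image_le
    _ = _ := by simp

theorem card_filter_card_fiber_ne_one_le [Fintype ι] [DecidableEq K] [Nonempty ι] :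
    #{a : K → ι | ∀ i, #{k | a k = i} ≠ 1} ≤
      Fintype.card ι ^ (Fintype.card K / 2) * (Fintype.card K / 2) ^ Fintype.card K := by
  refine le_trans (card_le_card fun a ha => mem_filter.2 ⟨mem_univ a, ?_⟩)
    (card_filter_card_image_le _)
  have := two_mul_card_image_le_of_card_fiber_ne_one (mem_filter.1 ha).2
  omega

end Counting

/-- Centered multinomial moment bound: for any multi-index `α`,
`|∑_ν (ν - nq)^α b_{n,ν}(q)| ≤ C(α,m) · n^{⌊‖α‖₁/2⌋}` uniformly over the simplex,
with `C` independent of `n`. -/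
theorem bernstein_centered_moment_bound (m : ℕ) (α : Fin m → ℕ) :
    ∃ C : ℝ, 0 < C ∧ ∀ n : ℕ, 0 < n → ∀ q : Fin m → ℝ,
      (∀ j, 0 ≤ q j) → (∑ j, q j = 1) →
      |∑ ν ∈ Finset.Nat.antidiagonalTuple m n,
          (∏ j, ((ν j : ℝ) - n * q j) ^ α j) * bernBasis ν q|
        ≤ C * (n : ℝ) ^ ((∑ j, α j) / 2) := by
  set k := ∑ j, α j
  refine ⟨((k / 2) ^ k : ℕ) + 1, by positivity, fun n hn q hq hq1 => ?_⟩
  have : Nonempty (Fin n) := Fin.pos_iff_nonempty.1 hn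
  have hcount := card_filter_card_fiber_ne_one_le (K := Σ j, Fin (α j)) (ι := Fin n)
  simp only [Fintype.card_sigma, Fintype.card_fin] at hcount
  rw [sum_mul_bernBasis_eq_sum_words]
  calc _ ≤ _ := by simpa using abs_sum_words_prod_centered_pow_le (ι := Fin n) hq hq1 α
    _ ≤ ((n ^ (k / 2) * (k / 2) ^ k : ℕ) : ℝ) := by exact_mod_cast hcount
    _ ≤ _ := by
        push_cast
        rw [mul_comm]
        exact mul_le_mul_of_nonneg_right (le_add_of_nonneg_right zero_le_one) (by positivity)
end

section
/- Let X₁,...,Xₙ be i.i.d. random variables and ℓ a measurable function with L₁ ≤ ℓ ≤ L₂ for some 0 < L₁ ≤ L₂. Let A be a measurable set, μ = E[ℓ(X₁)], μ_A = E[ℓ(X₁)·1_A(X₁)], and define the plug-in posterior mass R = (n⁻¹∑ᵢ ℓ(Xᵢ)1_A(Xᵢ)) / (n⁻¹∑ᵢ ℓ(Xᵢ)). Then |E[R] - μ_A/μ| ≤ C(L₁,L₂)/n for a constant depending only on L₁, L₂. -/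
/-!
Write `T` and `S` for the empirical means of `ℓ · 1_A` and `ℓ`, and `m_A`, `m` for their
expectations. The exact second-order expansion
`T/S - m_A/m = (T - m_A)/m - m_A (S - m)/m² - (T - m_A)(S - m)/m² + (T/S)(S - m)²/m²`
has two centred terms, so `E[T/S] - m_A/m = (E[(T/S)(S - m)²] - Cov(T, S))/m²`.
Since `0 ≤ T/S ≤ 1` and `m ≥ L₁`, this is at most `(Var S + |Cov(T, S)|)/L₁²`, and independence
makes `Var S` and `Cov(T, S)` equal to `1/n` times the corresponding one-sample quantities, which
are bounded in terms of `L₁` and `L₂`.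
-/

open MeasureTheory ProbabilityTheory

noncomputable def empiricalMean {Ω β : Type*} {n : ℕ} (f : β → ℝ) (X : Fin n → Ω → β) (ω : Ω) :
    ℝ :=
  (n : ℝ)⁻¹ * ∑ i, f (X i ω)

section EmpiricalMean

variable {Ω β : Type*} {n : ℕ} {X : Fin n → Ω → β} {f g : β → ℝ}

lemma empiricalMean_mono (hfg : ∀ x, f x ≤ g x) (ω : Ω) :
    empiricalMean f X ω ≤ empiricalMean g X ω :=
  mul_le_mul_of_nonneg_left (Finset.sum_le_sum fun i _ => hfg _) (by positivity)

lemma empiricalMean_const (hn : 0 < n) (c : ℝ) (ω : Ω) :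
    empiricalMean (fun _ => c) X ω = c := by
  simp only [empiricalMean, Finset.sum_const, Finset.card_univ, Fintype.card_fin, nsmul_eq_mul]
  field_simp

lemma empiricalMean_mem_Icc (hn : 0 < n) {a b : ℝ} (hf : ∀ x, f x ∈ Set.Icc a b) (ω : Ω) :
    empiricalMean f X ω ∈ Set.Icc a b := by
  constructor
  · simpa only [empiricalMean_const hn] using empiricalMean_mono (X := X) (fun x => (hf x).1) ω
  · simpa only [empiricalMean_const hn] using empiricalMean_mono (X := X) (fun x => (hf x).2) ω

variable [MeasurableSpace Ω] [MeasurableSpace β] {μ : Measure Ω} {i₀ : Fin n}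

lemma aemeasurable_empiricalMean (hf : Measurable f) (hX : ∀ i, AEMeasurable (X i) μ) :
    AEMeasurable (empiricalMean f X) μ := by
  unfold empiricalMean
  fun_prop

lemma integral_empiricalMean (hid : ∀ i, IdentDistrib (X i) (X i₀) μ μ) (hf : Measurable f)
    (hfX : Integrable (fun ω => f (X i₀ ω)) μ) :
    μ[empiricalMean f X] = μ[fun ω => f (X i₀ ω)] := by
  have hfXi (i : Fin n) : IdentDistrib (fun ω => f (X i ω)) (fun ω => f (X i₀ ω)) μ μ :=
    (hid i).comp hf
  unfold empiricalMean
  rw [integral_const_mul, integral_finsetSum _ fun i _ => (hfXi i).integrable_iff.2 hfX,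
    Finset.sum_congr rfl fun i _ => (hfXi i).integral_eq]
  simp only [Finset.sum_const, Finset.card_univ, Fintype.card_fin, nsmul_eq_mul]
  field_simp [i₀.pos.ne']

lemma covariance_comp_eq_of_identDistrib {Y Z : Ω → β} (h : IdentDistrib Y Z μ μ)
    (hf : Measurable f) (hg : Measurable g) :
    cov[fun ω => f (Y ω), fun ω => g (Y ω); μ] = cov[fun ω => f (Z ω), fun ω => g (Z ω); μ] := by
  rw [← covariance_map_fun hf.aestronglyMeasurable hg.aestronglyMeasurable h.aemeasurable_fst,
    h.map_eq, covariance_map_fun hf.aestronglyMeasurable hg.aestronglyMeasurable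
      h.aemeasurable_snd]

lemma covariance_empiricalMean [IsFiniteMeasure μ] (hindep : iIndepFun X μ)
    (hid : ∀ i, IdentDistrib (X i) (X i₀) μ μ)
    (hf : Measurable f) (hg : Measurable g) (hfX : MemLp (fun ω => f (X i₀ ω)) 2 μ)
    (hgX : MemLp (fun ω => g (X i₀ ω)) 2 μ) :
    cov[empiricalMean f X, empiricalMean g X; μ]
      = cov[fun ω => f (X i₀ ω), fun ω => g (X i₀ ω); μ] / n := by
  have hfXi (i : Fin n) : MemLp (fun ω => f (X i ω)) 2 μ := ((hid i).comp hf).memLp_iff.2 hfX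
  have hgXi (i : Fin n) : MemLp (fun ω => g (X i ω)) 2 μ := ((hid i).comp hg).memLp_iff.2 hgX
  have hcov (i j : Fin n) : cov[fun ω => f (X i ω), fun ω => g (X j ω); μ]
      = if i = j then cov[fun ω => f (X i₀ ω), fun ω => g (X i₀ ω); μ] else 0 := by
    split_ifs with hij
    · subst hij
      exact covariance_comp_eq_of_identDistrib (hid i) hf hg
    · exact ((hindep.indepFun hij).comp hf hg).covariance_eq_zero (hfXi i) (hgXi j)
  unfold empiricalMean
  rw [covariance_const_mul_left, covariance_const_mul_right,
    covariance_fun_sum_fun_sum hfXi hgXi,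
    Finset.sum_congr rfl fun i _ => Finset.sum_congr rfl fun j _ => hcov i j]
  simp only [Finset.sum_ite_eq, Finset.mem_univ, if_true, Finset.sum_const,
    Finset.card_univ, Fintype.card_fin, nsmul_eq_mul]
  field_simp [i₀.pos.ne']

end EmpiricalMean

section PluginRatio

variable {Ω : Type*} [MeasurableSpace Ω] {μ : Measure Ω} [IsProbabilityMeasure μ]

lemma ae_abs_sub_integral_le {U : Ω → ℝ} {a b : ℝ} (hU : Integrable U μ)
    (hUb : ∀ᵐ ω ∂μ, U ω ∈ Set.Icc a b) : ∀ᵐ ω ∂μ, |U ω - μ[U]| ≤ b - a := by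
  have ha : a ≤ μ[U] := by
    simpa using integral_mono_ae (integrable_const a) hU (hUb.mono fun ω h => h.1)
  have hb : μ[U] ≤ b := by
    simpa using integral_mono_ae hU (integrable_const b) (hUb.mono fun ω h => h.2)
  filter_upwards [hUb] with ω hω
  rw [abs_sub_le_iff]
  constructor <;> linarith [hω.1, hω.2]

lemma abs_covariance_le_of_mem_Icc {U V : Ω → ℝ} {a b c d : ℝ} (hU : Integrable U μ)
    (hV : Integrable V μ) (hUb : ∀ᵐ ω ∂μ, U ω ∈ Set.Icc a b)
    (hVb : ∀ᵐ ω ∂μ, V ω ∈ Set.Icc c d) :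
    |cov[U, V; μ]| ≤ (b - a) * (d - c) := by
  have h := norm_integral_le_of_norm_le_const (μ := μ) (C := (b - a) * (d - c))
    (f := fun ω => (U ω - μ[U]) * (V ω - μ[V])) ?_
  · simpa [covariance] using h
  filter_upwards [ae_abs_sub_integral_le hU hUb, ae_abs_sub_integral_le hV hVb] with ω h1 h2
  rw [Real.norm_eq_abs, abs_mul]
  exact mul_le_mul h1 h2 (abs_nonneg _) ((abs_nonneg _).trans h1)

variable {S T : Ω → ℝ}

lemma integral_div_sub_div_integral (hT : MemLp T 2 μ) (hS : MemLp S 2 μ)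
    (hS0 : ∀ ω, S ω ≠ 0) (hm : μ[S] ≠ 0)
    (hR : Integrable (fun ω => T ω / S ω * (S ω - μ[S]) ^ 2) μ) :
    μ[fun ω => T ω / S ω] - μ[T] / μ[S]
      = (μ[fun ω => T ω / S ω * (S ω - μ[S]) ^ 2] - cov[T, S; μ]) / μ[S] ^ 2 := by
  set m := μ[S]
  set mT := μ[T]
  have hTc : Integrable (fun ω => T ω - mT) μ := (hT.integrable one_le_two).sub (integrable_const _)
  have hSc : Integrable (fun ω => S ω - m) μ := (hS.integrable one_le_two).sub (integrable_const _)
  have hTS : Integrable (fun ω => (T ω - mT) * (S ω - m)) μ :=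
    (hT.sub (memLp_const mT)).integrable_mul (hS.sub (memLp_const m))
  have hTc0 : μ[fun ω => T ω - mT] = 0 := by
    rw [integral_sub (hT.integrable one_le_two) (integrable_const _)]; simp [mT]
  have hSc0 : μ[fun ω => S ω - m] = 0 := by
    rw [integral_sub (hS.integrable one_le_two) (integrable_const _)]; simp [m]
  have hexp (ω : Ω) : T ω / S ω = mT / m + ((T ω - mT) / m - mT / m ^ 2 * (S ω - m)
      - (T ω - mT) * (S ω - m) / m ^ 2 + T ω / S ω * (S ω - m) ^ 2 / m ^ 2) := by
    field_simp [hS0 ω]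
    ring
  have hcov : cov[T, S; μ] = μ[fun ω => (T ω - mT) * (S ω - m)] := rfl
  rw [hcov, integral_congr_ae (ae_of_all _ hexp), integral_add (integrable_const _) (by fun_prop),
    integral_add (by fun_prop) (by fun_prop), integral_sub (by fun_prop) (by fun_prop),
    integral_sub (by fun_prop) (by fun_prop), integral_div, integral_div, integral_div, integral_div,
    integral_const_mul, hTc0, hSc0]
  simp only [integral_const, probReal_univ, one_smul]
  ring

lemma abs_integral_div_sub_div_integral_le (hT : MemLp T 2 μ) (hS : MemLp S 2 μ)
    (hT0 : ∀ ω, 0 ≤ T ω) (hTS : ∀ ω, T ω ≤ S ω) (hS0 : ∀ ω, 0 < S ω) :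
    |μ[fun ω => T ω / S ω] - μ[T] / μ[S]| ≤ (Var[S; μ] + |cov[T, S; μ]|) / μ[S] ^ 2 := by
  have hm : 0 < μ[S] := by
    rw [integral_pos_iff_support_of_nonneg (fun ω => (hS0 ω).le) (hS.integrable one_le_two),
      Function.support_eq_univ fun ω => (hS0 ω).ne']
    simp
  have hratio (ω : Ω) : T ω / S ω ∈ Set.Icc 0 1 :=
    ⟨div_nonneg (hT0 ω) (hS0 ω).le, div_le_one_of_le₀ (hTS ω) (hS0 ω).le⟩
  have hsq : Integrable (fun ω => (S ω - μ[S]) ^ 2) μ := (hS.sub (memLp_const _)).integrable_sq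
  have hR : Integrable (fun ω => T ω / S ω * (S ω - μ[S]) ^ 2) μ :=
    hsq.bdd_mul (hT.1.aemeasurable.div hS.1.aemeasurable).aestronglyMeasurable
      (c := 1) (ae_of_all _ fun ω => abs_le.2 ⟨by linarith [(hratio ω).1], (hratio ω).2⟩)
  have hR0 : 0 ≤ μ[fun ω => T ω / S ω * (S ω - μ[S]) ^ 2] :=
    integral_nonneg fun ω => mul_nonneg (hratio ω).1 (sq_nonneg _)
  have hRvar : μ[fun ω => T ω / S ω * (S ω - μ[S]) ^ 2] ≤ Var[S; μ] := by
    rw [variance_eq_integral hS.1.aemeasurable]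
    exact integral_mono hR hsq fun ω => mul_le_of_le_one_left (sq_nonneg _) (hratio ω).2
  rw [integral_div_sub_div_integral hT hS (fun ω => (hS0 ω).ne') hm.ne' hR, abs_div,
    abs_of_pos (pow_pos hm 2)]
  gcongr ?_ / _
  calc _ ≤ |μ[fun ω => T ω / S ω * (S ω - μ[S]) ^ 2]| + |cov[T, S; μ]| := abs_sub _ _
    _ ≤ Var[S; μ] + |cov[T, S; μ]| := by rw [abs_of_nonneg hR0]; gcongr

end PluginRatio

section PluginPosterior

variable {Ω β : Type*} [MeasurableSpace Ω] [MeasurableSpace β] {μ : Measure Ω}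
  [IsProbabilityMeasure μ] {n : ℕ} {X : Fin n → Ω → β} {f g : β → ℝ} {L₁ L₂ : ℝ}

lemma abs_integral_empiricalMean_div_sub_le (i₀ : Fin n) (hindep : iIndepFun X μ)
    (hid : ∀ i, IdentDistrib (X i) (X i₀) μ μ) (hf : Measurable f) (hg : Measurable g)
    (hL₁ : 0 < L₁) (hfb : ∀ x, f x ∈ Set.Icc L₁ L₂) (hgb : ∀ x, g x ∈ Set.Icc 0 (f x)) :
    |μ[fun ω => empiricalMean g X ω / empiricalMean f X ω]
        - μ[fun ω => g (X i₀ ω)] / μ[fun ω => f (X i₀ ω)]|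
      ≤ ((L₂ - L₁) ^ 2 + L₂ * (L₂ - L₁)) / L₁ ^ 2 / n := by
  have hX (i : Fin n) : AEMeasurable (X i) μ := (hid i).aemeasurable_fst
  have hgb' (x : β) : g x ∈ Set.Icc 0 L₂ := ⟨(hgb x).1, (hgb x).2.trans (hfb x).2⟩
  have hSb := empiricalMean_mem_Icc (X := X) i₀.pos hfb
  have hTb := empiricalMean_mem_Icc (X := X) i₀.pos hgb'
  have hS : MemLp (empiricalMean f X) 2 μ :=
    memLp_of_bounded (ae_of_all _ hSb) (aemeasurable_empiricalMean hf hX).aestronglyMeasurable 2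
  have hT : MemLp (empiricalMean g X) 2 μ :=
    memLp_of_bounded (ae_of_all _ hTb) (aemeasurable_empiricalMean hg hX).aestronglyMeasurable 2
  have hf₀ : MemLp (fun ω => f (X i₀ ω)) 2 μ := memLp_of_bounded (ae_of_all _ fun ω => hfb _)
    (hf.comp_aemeasurable (hX i₀)).aestronglyMeasurable 2
  have hg₀ : MemLp (fun ω => g (X i₀ ω)) 2 μ := memLp_of_bounded (ae_of_all _ fun ω => hgb' _)
    (hg.comp_aemeasurable (hX i₀)).aestronglyMeasurable 2
  have hvar : Var[empiricalMean f X; μ] ≤ (L₂ - L₁) ^ 2 / n := by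
    rw [← covariance_self hS.1.aemeasurable, covariance_empiricalMean hindep hid hf hf hf₀ hf₀, sq]
    gcongr
    exact (le_abs_self _).trans (abs_covariance_le_of_mem_Icc (hf₀.integrable one_le_two)
      (hf₀.integrable one_le_two) (ae_of_all _ fun ω => hfb _) (ae_of_all _ fun ω => hfb _))
  have hcov : |cov[empiricalMean g X, empiricalMean f X; μ]| ≤ L₂ * (L₂ - L₁) / n := by
    rw [covariance_empiricalMean hindep hid hg hf hg₀ hf₀, abs_div, Nat.abs_cast]
    gcongr
    simpa using abs_covariance_le_of_mem_Icc (hg₀.integrable one_le_two)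
      (hf₀.integrable one_le_two) (ae_of_all _ fun ω => hgb' _) (ae_of_all _ fun ω => hfb _)
  have hm : L₁ ≤ μ[empiricalMean f X] := by
    simpa using integral_mono (integrable_const L₁) (hS.integrable one_le_two) fun ω => (hSb ω).1
  rw [← integral_empiricalMean hid hf (hf₀.integrable one_le_two),
    ← integral_empiricalMean hid hg (hg₀.integrable one_le_two)]
  calc _ ≤ (Var[empiricalMean f X; μ] + |cov[empiricalMean g X, empiricalMean f X; μ]|)
        / μ[empiricalMean f X] ^ 2 :=
      abs_integral_div_sub_div_integral_le hT hS (fun ω => (hTb ω).1)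
        (empiricalMean_mono fun x => (hgb x).2) fun ω => hL₁.trans_le (hSb ω).1
    _ ≤ ((L₂ - L₁) ^ 2 / n + L₂ * (L₂ - L₁) / n) / L₁ ^ 2 := by
      gcongr
      exact add_nonneg ((variance_nonneg _ _).trans hvar) ((abs_nonneg _).trans hcov)
    _ = ((L₂ - L₁) ^ 2 + L₂ * (L₂ - L₁)) / L₁ ^ 2 / n := by ring

end PluginPosterior

/-- `O(n⁻¹)` bias of the plug-in posterior mass: with `0 < L₁ ≤ ℓ ≤ L₂`, i.i.d. samples
`X₁,...,Xₙ`, `μℓ = E[ℓ(X₁)]`, `μ_A = E[ℓ(X₁)1_A(X₁)]` and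
`R = (n⁻¹∑ℓ(Xᵢ)1_A(Xᵢ))/(n⁻¹∑ℓ(Xᵢ))`, one has `|E[R] - μ_A/μℓ| ≤ C(L₁,L₂)/n`. -/
theorem plugin_posterior_bias (L₁ L₂ : ℝ) (hL₁ : 0 < L₁) (hL : L₁ ≤ L₂) :
    ∃ C : ℝ, 0 < C ∧
      ∀ (Ω : Type) (_ : MeasurableSpace Ω) (μ : Measure Ω), IsProbabilityMeasure μ →
      ∀ (n : ℕ) (hn : 0 < n) (X : Fin n → Ω → ℝ) (ℓ : ℝ → ℝ) (A : Set ℝ),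
        MeasurableSet A → Measurable ℓ → (∀ x, L₁ ≤ ℓ x ∧ ℓ x ≤ L₂) →
        (∀ i, Measurable (X i)) →
        iIndepFun X μ →
        (∀ i, Measure.map (X i) μ = Measure.map (X ⟨0, hn⟩) μ) →
        |(∫ ω, (((n : ℝ)⁻¹ * ∑ i, ℓ (X i ω) * A.indicator (fun _ => (1 : ℝ)) (X i ω)) /
              ((n : ℝ)⁻¹ * ∑ i, ℓ (X i ω))) ∂μ)
            - (∫ ω, ℓ (X ⟨0, hn⟩ ω) * A.indicator (fun _ => (1 : ℝ)) (X ⟨0, hn⟩ ω) ∂μ) /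
              (∫ ω, ℓ (X ⟨0, hn⟩ ω) ∂μ)|
          ≤ C / n := by
  refine ⟨2 * L₂ ^ 2 / L₁ ^ 2, by have := hL₁.trans_le hL; positivity, ?_⟩
  intro Ω _ μ _ n hn X ℓ A hA hℓ hℓb hX hindep hid
  have hgb (x : ℝ) : ℓ x * A.indicator (fun _ => (1 : ℝ)) x ∈ Set.Icc 0 (ℓ x) := by
    by_cases hx : x ∈ A <;> simp [hx, hL₁.le.trans (hℓb x).1]
  refine (abs_integral_empiricalMean_div_sub_le ⟨0, hn⟩ hindep
    (fun i => ⟨(hX i).aemeasurable, (hX _).aemeasurable, hid i⟩) hℓ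
    (hℓ.mul (measurable_const.indicator hA)) hL₁ hℓb hgb).trans ?_
  gcongr
  nlinarith
end

section
/- In the same setting (L₁ ≤ ℓ ≤ L₂, R the plug-in posterior mass of a measurable set A based on n i.i.d. samples), Var(R) ≤ C(L₁,L₂)/n. -/
/-! With `N`, `D` the numerator and denominator of `R` and `a = 𝔼 N ≤ b = 𝔼 D`, the identity
`N / D - a / b = ((N - a) - (a / b) (D - b)) / D`, together with `0 ≤ a / b ≤ 1` and `D ≥ L₁`, gives
`(R - a / b)² ≤ 2 ((N - a)² + (D - b)²) / L₁²`, hence `Var R ≤ 2 (Var N + Var D) / L₁²`.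
Both `N` and `D` are averages of `n` pairwise independent variables with values in `[0, L₂]`, so by
Popoviciu's inequality each has variance at most `L₂² / (4 n)`; thus `C = (L₂ / L₁)²` works. -/

open MeasureTheory ProbabilityTheory Finset Set

lemma inv_card_mul_sum_mem_Icc {ι : Type*} [Fintype ι] [Nonempty ι] {f : ι → ℝ} {a b : ℝ}
    (hf : ∀ i, f i ∈ Icc a b) : (Fintype.card ι : ℝ)⁻¹ * ∑ i, f i ∈ Icc a b := by
  have hcard : (0 : ℝ) < Fintype.card ι := by exact_mod_cast Fintype.card_pos
  rw [inv_mul_eq_div, Set.mem_Icc, le_div_iff₀ hcard, div_le_iff₀ hcard, mul_comm a, mul_comm b]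
  constructor
  · simpa using card_nsmul_le_sum univ f a fun i _ => (hf i).1
  · simpa using sum_le_card_nsmul univ f b fun i _ => (hf i).2

lemma sq_div_sub_div_le {x y a b L : ℝ} (hL : 0 < L) (hy : L ≤ y) (ha : 0 ≤ a) (hab : a ≤ b) :
    (x / y - a / b) ^ 2 ≤ 2 * ((x - a) ^ 2 + (y - b) ^ 2) / L ^ 2 := by
  set t := a / b
  have ht₀ : 0 ≤ t := div_nonneg ha (ha.trans hab)
  have ht₁ : t ≤ 1 := div_le_one_of_le₀ hab (ha.trans hab)
  -- also when `b = 0`, where `a = 0` and `a / b = 0`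
  have htb : t * b = a := div_mul_cancel_of_imp fun hb => by linarith
  clear_value t
  have hy₀ : 0 < y := hL.trans_le hy
  have hsplit : x / y - t = ((x - a) - t * (y - b)) / y := by
    field_simp
    linear_combination -htb
  have hnum : ((x - a) - t * (y - b)) ^ 2 ≤ 2 * ((x - a) ^ 2 + (y - b) ^ 2) := by
    have : t ^ 2 ≤ 1 := by nlinarith
    nlinarith [sq_nonneg ((x - a) + t * (y - b)), sq_nonneg (y - b)]
  rw [hsplit, div_pow]
  exact div_le_div₀ (by positivity) hnum (by positivity) (by gcongr)

namespace ProbabilityTheory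

variable {Ω : Type*} [MeasurableSpace Ω] {μ : Measure Ω}

lemma variance_inv_card_mul_sum_le_of_bounded [IsProbabilityMeasure μ] {ι : Type*} [Fintype ι]
    {Y : ι → Ω → ℝ} {a b : ℝ} (hYm : ∀ i, AEMeasurable (Y i) μ) (hY : ∀ i ω, Y i ω ∈ Icc a b)
    (hindep : Pairwise fun i j => Y i ⟂ᵢ[μ] Y j) :
    variance (fun ω => (Fintype.card ι : ℝ)⁻¹ * ∑ i, Y i ω) μ
      ≤ ((b - a) / 2) ^ 2 / Fintype.card ι := by
  set n : ℝ := (Fintype.card ι : ℝ)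
  have hY2 : ∀ i, MemLp (Y i) 2 μ := fun i =>
    memLp_of_bounded (ae_of_all _ (hY i)) (hYm i).aestronglyMeasurable 2
  have hsum : variance (∑ i, Y i) μ = ∑ i, variance (Y i) μ :=
    IndepFun.variance_sum (fun i _ => hY2 i) fun i _ j _ hij => hindep hij
  calc variance (fun ω => n⁻¹ * ∑ i, Y i ω) μ = n⁻¹ ^ 2 * ∑ i, variance (Y i) μ := by
        rw [← hsum, ← variance_const_mul]
        simp only [Finset.sum_apply]
    _ ≤ n⁻¹ ^ 2 * (n * ((b - a) / 2) ^ 2) := by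
        gcongr
        simpa using sum_le_card_nsmul univ _ _ fun i _ =>
          variance_le_sq_of_bounded (ae_of_all _ (hY i)) (hYm i)
    _ = ((b - a) / 2) ^ 2 / n := by
        rcases eq_or_ne n 0 with hn | hn
        · simp [hn]
        · field_simp

lemma variance_le_integral_sub_sq [IsProbabilityMeasure μ] {X : Ω → ℝ}
    (hX : AEStronglyMeasurable X μ) (c : ℝ) : variance X μ ≤ ∫ ω, (X ω - c) ^ 2 ∂μ := by
  rw [← variance_sub_const hX c]
  exact variance_le_expectation_sq (hX.sub aestronglyMeasurable_const)

lemma variance_div_le [IsProbabilityMeasure μ] {N D : Ω → ℝ} {L : ℝ} (hL : 0 < L)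
    (hN : MemLp N 2 μ) (hD : MemLp D 2 μ) (hN₀ : ∀ ω, 0 ≤ N ω) (hND : ∀ ω, N ω ≤ D ω)
    (hLD : ∀ ω, L ≤ D ω) :
    variance (fun ω => N ω / D ω) μ ≤ 2 * (variance N μ + variance D μ) / L ^ 2 := by
  have hN₁ := hN.integrable one_le_two
  have hD₁ := hD.integrable one_le_two
  have hNa : Integrable (fun ω => (N ω - μ[N]) ^ 2) μ := (hN.sub (memLp_const μ[N])).integrable_sq
  have hDb : Integrable (fun ω => (D ω - μ[D]) ^ 2) μ := (hD.sub (memLp_const μ[D])).integrable_sq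
  calc variance (fun ω => N ω / D ω) μ ≤ ∫ ω, (N ω / D ω - μ[N] / μ[D]) ^ 2 ∂μ :=
        variance_le_integral_sub_sq (hN.aemeasurable.div hD.aemeasurable).aestronglyMeasurable _
    _ ≤ ∫ ω, 2 * ((N ω - μ[N]) ^ 2 + (D ω - μ[D]) ^ 2) / L ^ 2 ∂μ :=
        integral_mono_of_nonneg (ae_of_all _ fun _ => sq_nonneg _)
          (((hNa.add hDb).const_mul 2).div_const _) (ae_of_all _ fun ω =>
            sq_div_sub_div_le hL (hLD ω) (integral_nonneg hN₀) (integral_mono hN₁ hD₁ hND))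
    _ = 2 * (variance N μ + variance D μ) / L ^ 2 := by
        rw [integral_div, integral_const_mul, integral_add hNa hDb,
          variance_eq_integral hN.1.aemeasurable, variance_eq_integral hD.1.aemeasurable]

end ProbabilityTheory

/-- `O(n⁻¹)` variance of the plug-in posterior mass: with `0 < L₁ ≤ ℓ ≤ L₂`, i.i.d. samples
`X₁,...,Xₙ` and `R = (n⁻¹∑ℓ(Xᵢ)1_A(Xᵢ))/(n⁻¹∑ℓ(Xᵢ))`, one has `Var(R) ≤ C(L₁,L₂)/n`. -/
theorem plugin_posterior_variance (L₁ L₂ : ℝ) (hL₁ : 0 < L₁) (hL : L₁ ≤ L₂) :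
    ∃ C : ℝ, 0 < C ∧
      ∀ (Ω : Type) (_ : MeasurableSpace Ω) (μ : Measure Ω), IsProbabilityMeasure μ →
      ∀ (n : ℕ) (hn : 0 < n) (X : Fin n → Ω → ℝ) (ℓ : ℝ → ℝ) (A : Set ℝ),
        MeasurableSet A → Measurable ℓ → (∀ x, L₁ ≤ ℓ x ∧ ℓ x ≤ L₂) →
        (∀ i, Measurable (X i)) →
        iIndepFun X μ →
        (∀ i, Measure.map (X i) μ = Measure.map (X ⟨0, hn⟩) μ) →
        variance (fun ω =>
            ((n : ℝ)⁻¹ * ∑ i, ℓ (X i ω) * A.indicator (fun _ => (1 : ℝ)) (X i ω)) /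
              ((n : ℝ)⁻¹ * ∑ i, ℓ (X i ω))) μ
          ≤ C / n := by
  refine ⟨(L₂ / L₁) ^ 2, pow_pos (div_pos (hL₁.trans_le hL) hL₁) 2, ?_⟩
  intro Ω _ μ _ n hn X ℓ A hA hℓ hℓL hX hindep _
  have : Nonempty (Fin n) := ⟨⟨0, hn⟩⟩
  have hmean_mem {g : ℝ → ℝ} {a b : ℝ} (hg : ∀ x, g x ∈ Icc a b) (ω : Ω) :
      (n : ℝ)⁻¹ * ∑ i, g (X i ω) ∈ Icc a b := by
    simpa using inv_card_mul_sum_mem_Icc fun i => hg (X i ω)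
  have hmean {g : ℝ → ℝ} (hgm : Measurable g) (hg : ∀ x, g x ∈ Icc 0 L₂) :
      MemLp (fun ω => (n : ℝ)⁻¹ * ∑ i, g (X i ω)) 2 μ ∧
        variance (fun ω => (n : ℝ)⁻¹ * ∑ i, g (X i ω)) μ ≤ (L₂ / 2) ^ 2 / n := by
    have hvar := variance_inv_card_mul_sum_le_of_bounded (μ := μ) (Y := fun i ω => g (X i ω))
      (fun i => (hgm.comp (hX i)).aemeasurable) (fun i ω => hg _)
      (fun i j hij => (hindep.indepFun hij).comp hgm hgm)
    simp only [Fintype.card_fin, sub_zero] at hvar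
    have hmeas : Measurable fun ω => (n : ℝ)⁻¹ * ∑ i, g (X i ω) :=
      measurable_const.mul (measurable_sum _ fun i _ => hgm.comp (hX i))
    exact ⟨memLp_of_bounded (ae_of_all _ (hmean_mem hg)) hmeas.aestronglyMeasurable 2, hvar⟩
  have hwℓ (x : ℝ) : ℓ x * A.indicator (fun _ => (1 : ℝ)) x ≤ ℓ x := by
    by_cases hx : x ∈ A <;> simp [hx, hL₁.le.trans (hℓL x).1]
  have hwI (x : ℝ) : ℓ x * A.indicator (fun _ => (1 : ℝ)) x ∈ Icc 0 L₂ := by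
    by_cases hx : x ∈ A <;> simp [hx, hL₁.le.trans (hℓL x).1, (hℓL x).2, hL₁.le.trans hL]
  obtain ⟨hN, hNvar⟩ := hmean (hℓ.mul (measurable_const.indicator hA)) hwI
  obtain ⟨hD, hDvar⟩ := hmean hℓ fun x => ⟨hL₁.le.trans (hℓL x).1, (hℓL x).2⟩
  calc _ ≤ 2 * (variance _ μ + variance _ μ) / L₁ ^ 2 :=
        variance_div_le hL₁ hN hD (fun ω => (hmean_mem hwI ω).1)
          (fun ω => mul_le_mul_of_nonneg_left (sum_le_sum fun i _ => hwℓ _) (by positivity))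
          (fun ω => (hmean_mem hℓL ω).1)
    _ ≤ 2 * ((L₂ / 2) ^ 2 / n + (L₂ / 2) ^ 2 / n) / L₁ ^ 2 := by gcongr
    _ = (L₂ / L₁) ^ 2 / n := by field_simp; ring
end
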